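/- For all integers n ≥ 1 and 1 ≤ i ≤ n, a_{n,i} = s_o(n,i) − s_e(n,i), where s_o(n,i) (respectively s_e(n,i)) is the total number of occurrences of the part i counted over all partitions of n into an odd (respectively even) number of distinct parts. -/

import Mathlib

/-!
STATEMENT 7: For all `n ≥ 1` and `1 ≤ i ≤ n`, `a_{n,i} = s_o(n,i) - s_e(n,i)`, where
`s_o(n,i)` (resp. `s_e(n,i)`) is the number of occurrences of the part `i` over all
partitions of `n` into an odd (resp. even) number of distinct parts.  A partition of `n`
into distinct parts is a finite set of distinct positive integers summing to `n`
(necessarily a subset of `{1, …, n}`); since parts are distinct, the total number of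
occurrences of `i` is the number of such partitions containing `i`.
-/

/-- `c(m) = (-1)^k` when `m = k(3k+1)/2` or `m = k(3k-1)/2` for some integer `k ≥ 0`,
and `c(m) = 0` otherwise. -/
def pentCoeff (m : ℤ) : ℤ :=
  ∑ k ∈ Finset.range (m.toNat + 1),
    ((if 2 * m = (k : ℤ) * (3 * k + 1) then (-1 : ℤ) ^ k else 0) +
      (if 2 * m = (k : ℤ) * (3 * k - 1) ∧ 1 ≤ k then (-1 : ℤ) ^ k else 0))

/-- `a_{n,i} := ∑_{s=0}^{⌊n/i⌋ - 1} c(n - (s+1) i)`. -/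
def aEnt (n i : ℕ) : ℤ :=
  ∑ s ∈ Finset.range (n / i), pentCoeff ((n : ℤ) - (s + 1) * i)

/-- The number of occurrences of `i` as a part over all partitions of `n` into an odd
number of distinct parts. -/
def sOdd (n i : ℕ) : ℕ :=
  ((Finset.Icc 1 n).powerset.filter
    (fun S => S.sum id = n ∧ i ∈ S ∧ Odd S.card)).card

/-- The number of occurrences of `i` as a part over all partitions of `n` into an even
number of distinct parts. -/
def sEven (n i : ℕ) : ℕ :=
  ((Finset.Icc 1 n).powerset.filter
    (fun S => S.sum id = n ∧ i ∈ S ∧ Even S.card)).card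

/-!
With `F = ∏_{k ≤ n} (1 - X^k)`, the signed count `s_o(n,i) - s_e(n,i)` is the coefficient of
`X^(n-i)` in `F / (1 - X^i)`, since removing the part `i` from a partition flips the parity of
its number of parts. By Euler's pentagonal number theorem the coefficients of `F` up to `X^n`
are the `c(m)`, and dividing by `1 - X^i` sums them along the progression `n - i - s i`.
-/

open PowerSeries Finset

variable {R : Type*} [CommRing R]

theorem coeff_prod_one_sub_X_pow (s : Finset ℕ) (m : ℕ) :
    coeff m (∏ k ∈ s, (1 - X ^ k) : R⟦X⟧) =
      ∑ t ∈ s.powerset with t.sum id = m, (-1) ^ t.card := by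
  simp_rw [sub_eq_neg_add, prod_add, prod_const_one, mul_one]
  rw [map_sum, sum_filter]
  refine sum_congr rfl fun t _ => ?_
  rw [prod_neg, prod_pow_eq_pow_sum, show ((-1) ^ #t : R⟦X⟧) = C ((-1) ^ #t) by simp,
    coeff_C_mul_X_pow]
  simp only [id_eq, eq_comm]

theorem coeff_mul_prod_one_sub_X_pow_of_lt {ι : Type*} {m : ℕ} (f : R⟦X⟧) (t : Finset ι)
    (e : ι → ℕ) (h : ∀ k ∈ t, m < e k) :
    coeff m (f * ∏ k ∈ t, (1 - X ^ e k)) = coeff m f := by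
  classical
  induction t using Finset.induction_on with
  | empty => rw [prod_empty, mul_one]
  | insert a t ha ih =>
    rw [prod_insert ha, mul_left_comm, sub_mul, one_mul, map_sub,
      ih fun k hk => h k (mem_insert_of_mem hk), coeff_X_pow_mul',
      if_neg (not_le.2 (h a (mem_insert_self a t))), sub_zero]

theorem coeff_prod_Icc_one_sub_X_pow_of_le {m N : ℕ} (h : m ≤ N) :
    coeff m (∏ k ∈ Icc 1 N, (1 - X ^ k) : R⟦X⟧) = coeff m (pentagonalSeries R) := by
  obtain ⟨s, hs⟩ := Filter.eventually_atTop.1 (coeff_prod_one_sub_X_pow_eventually_eq R m)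
  rw [← hs (range N ∪ s) subset_union_right, ← union_sdiff_self_eq_union,
    prod_union disjoint_sdiff, coeff_mul_prod_one_sub_X_pow_of_lt _ _ (· + 1)
      fun k hk => by have := mem_range.not.1 (mem_sdiff.1 hk).2; omega,
    range_eq_Ico, prod_Ico_add' (fun k => (1 - X ^ k : R⟦X⟧)), zero_add,
    Ico_add_one_right_eq_Icc]

theorem coeff_eq_sum_coeff_of_one_sub_X_pow_mul_eq {F G : R⟦X⟧} {i : ℕ} (hi : 0 < i)
    (h : (1 - X ^ i) * G = F) (m : ℕ) :
    coeff m G = ∑ s ∈ range (m / i + 1), coeff (m - s * i) F := by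
  induction m using Nat.strong_induction_on with
  | _ m ih =>
    have hG : coeff m G = coeff m F + if i ≤ m then coeff (m - i) G else 0 := by
      rw [← h, sub_mul, one_mul, map_sub, coeff_X_pow_mul']; ring
    rcases lt_or_ge m i with hm | hm
    · rw [hG, if_neg (not_le.2 hm), Nat.div_eq_of_lt hm, sum_range_one]; simp
    · rw [hG, if_pos hm, ih (m - i) (by omega), Nat.div_eq_sub_div hi hm,
        sum_range_succ' _ (_ + 1), add_comm]
      simp only [zero_mul, Nat.sub_zero, add_mul, one_mul, Nat.sub_sub, add_comm i]

theorem sum_powerset_filter_mem_eq_neg {s : Finset ℕ} {i m : ℕ} (hi : i ∈ s) (him : i ≤ m) :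
    ∑ t ∈ s.powerset with t.sum id = m ∧ i ∈ t, (-1 : R) ^ t.card =
      -∑ u ∈ (s.erase i).powerset with u.sum id = m - i, (-1 : R) ^ u.card := by
  rw [← sum_neg_distrib]
  refine sum_nbij' (fun t => t.erase i) (insert i) ?_ ?_ ?_ ?_ ?_
  · intro t ht
    simp only [mem_filter, mem_powerset] at ht ⊢
    refine ⟨erase_subset_erase i ht.1, ?_⟩
    rw [← ht.2.1, ← add_sum_erase t id ht.2.2, id, Nat.add_sub_cancel_left]
  · intro u hu
    simp only [mem_filter, mem_powerset] at hu ⊢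
    have hiu : i ∉ u := fun h => (mem_erase.1 (hu.1 h)).1 rfl
    refine ⟨insert_subset hi (hu.1.trans (erase_subset i s)), ?_, mem_insert_self i u⟩
    rw [sum_insert hiu, hu.2, id, Nat.add_sub_cancel' him]
  · intro t ht
    exact insert_erase (mem_filter.1 ht).2.2
  · intro u hu
    exact erase_insert fun h => (mem_erase.1 (mem_powerset.1 (mem_filter.1 hu).1 h)).1 rfl
  · intro t ht
    rw [← card_erase_add_one (mem_filter.1 ht).2.2, pow_succ, mul_neg_one]

theorem natAbs_le_pentagonal (j : ℤ) : j.natAbs ≤ pentagonal j := by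
  have h := two_mul_natCast_pentagonal j
  zify
  rcases le_or_gt 0 j with hj | hj
  · rw [abs_of_nonneg hj]; nlinarith
  · rw [abs_of_neg hj]; nlinarith

theorem pentCoeff_natCast (m : ℕ) : pentCoeff m = coeff m (pentagonalSeries ℤ) := by
  have two_mul_eq {m' : ℕ} : 2 * (m : ℤ) = 2 * m' ↔ m' = m := by omega
  simp_rw [pentCoeff, Int.toNat_natCast, ← two_mul_natCast_pentagonal_neg,
    ← two_mul_natCast_pentagonal, two_mul_eq]
  by_cases hm : m ∈ Set.range pentagonal
  · obtain ⟨j, rfl⟩ := hm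
    rw [coeff_pentagonalSeries_pentagonal, Int.coe_negOnePow,
      sum_eq_single j.natAbs]
    · simp only [pentagonal_inj]
      rcases le_or_gt j 0 with hj | hj
      · rw [if_pos (by omega), if_neg (by omega), add_zero]
      · rw [if_neg (by omega), if_pos (by omega), zero_add]
    · intro k _ hk
      simp only [pentagonal_inj]
      rw [if_neg (by omega), if_neg (by omega), add_zero]
    · intro h
      exact absurd (mem_range.2 (Nat.lt_succ_of_le (natAbs_le_pentagonal j))) h
  · rw [coeff_pentagonalSeries_eq_zero ℤ hm]
    refine sum_eq_zero fun k _ => ?_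
    rw [if_neg (fun h => hm ⟨_, h⟩), if_neg (fun h => hm ⟨_, h.1⟩), add_zero]

theorem sEven_sub_sOdd (n i : ℕ) :
    (sEven n i : ℤ) - sOdd n i =
      ∑ t ∈ (Icc 1 n).powerset with t.sum id = n ∧ i ∈ t, (-1 : ℤ) ^ t.card := by
  rw [← sum_filter_add_sum_filter_not _ (fun t => Even t.card), sum_congr rfl fun t ht =>
      (mem_filter.1 ht).2.neg_one_pow, sum_congr rfl fun t ht =>
      (Nat.not_even_iff_odd.1 (mem_filter.1 ht).2).neg_one_pow, sum_const, sum_const,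
    filter_filter, filter_filter, sEven, sOdd]
  simp only [Nat.not_even_iff_odd, and_assoc, nsmul_eq_mul, mul_one, mul_neg, sub_eq_add_neg]

theorem statement7_general (n i : ℕ) (hi1 : 1 ≤ i) (hin : i ≤ n) :
    aEnt n i = (sOdd n i : ℤ) - (sEven n i : ℤ) := by
  have hi : i ∈ Icc 1 n := mem_Icc.2 ⟨hi1, hin⟩
  set F : ℤ⟦X⟧ := ∏ k ∈ Icc 1 n, (1 - X ^ k)
  have hF : (1 - X ^ i) * ∏ k ∈ (Icc 1 n).erase i, (1 - X ^ k) = F :=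
    mul_prod_erase _ (fun k => 1 - X ^ k) hi
  calc aEnt n i = ∑ s ∈ range ((n - i) / i + 1), coeff (n - i - s * i) F := by
        rw [aEnt, Nat.div_eq_sub_div hi1 hin]
        refine sum_congr rfl fun s hs => ?_
        have hsi : s * i ≤ n - i := (Nat.mul_le_mul_right i
          (Nat.lt_succ_iff.1 (mem_range.1 hs))).trans (Nat.div_mul_le_self _ _)
        rw [coeff_prod_Icc_one_sub_X_pow_of_le (by omega), ← pentCoeff_natCast]
        congr 1
        push_cast [Nat.sub_sub, Nat.cast_sub (show i + s * i ≤ n by omega)]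
        ring
    _ = coeff (n - i) (∏ k ∈ (Icc 1 n).erase i, (1 - X ^ k)) :=
        (coeff_eq_sum_coeff_of_one_sub_X_pow_mul_eq hi1 hF _).symm
    _ = (sOdd n i : ℤ) - sEven n i := by
        rw [coeff_prod_one_sub_X_pow, ← neg_neg (∑ u ∈ _ with _, _),
          ← sum_powerset_filter_mem_eq_neg hi hin, ← sEven_sub_sOdd, neg_sub]

theorem statement7 (n i : ℕ) (hn : 1 ≤ n) (hi1 : 1 ≤ i) (hin : i ≤ n) :
    aEnt n i = (sOdd n i : ℤ) - (sEven n i : ℤ) :=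
  statement7_general n i hi1 hin
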